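/- arXiv:1902.04187 — 2 statements merged into one kernel-verified Lean document; each statement's English description precedes it below -/
import Mathlib

section
/- The Banzhaf value satisfies 2-efficiency: let d ≥ 2, let v : 2^{[d]} → ℝ, and let i, j ∈ [d] be distinct. Define the merged game v^{ij} on the ground set U = [d] ∖ {j} (with i playing the role of the merged player p) by v^{ij}(S) = v(S) if i ∉ S and v^{ij}(S) = v(S ∪ {j}) if i ∈ S, for S ⊆ U. Then the Banzhaf value of the merged player in the merged game equals φ_i(v) + φ_j(v); that is, 2^{−(|U|−1)} Σ_{S ⊆ U∖{i}} ( v^{ij}(S ∪ {i}) − v^{ij}(S) ) = φ_i(v) + φ_j(v). -/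
open Finset

/-- The Banzhaf value of player `i ∈ U` for a game on a finite ground set `U ⊆ [d]` with
characteristic function `w` :
`φ_i(U, w) = 2^{-(|U|-1)} Σ_{S ⊆ U \ {i}} ( w(S ∪ {i}) − w(S) )`. -/
noncomputable def banzhafOn (d : ℕ) (U : Finset (Fin d)) (w : Finset (Fin d) → ℝ)
    (i : Fin d) : ℝ :=
  ((2 : ℝ) ^ (U.card - 1))⁻¹ * ∑ S ∈ (U.erase i).powerset, (w (insert i S) - w S)

/-- 2-Efficiency of the Banzhaf value: merging the distinct players `i, j` into a single
player (represented by `i`, on the ground set `U = [d] \ {j}`, with merged game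
`v^{ij}(S) = v S` if `i ∉ S` and `v^{ij}(S) = v (S ∪ {j})` if `i ∈ S`) gives the merged
player the value `φ_i(v) + φ_j(v)`. -/
theorem stmt_4 (d : ℕ) (hd : 2 ≤ d) (v : Finset (Fin d) → ℝ) (i j : Fin d) (hij : i ≠ j) :
    banzhafOn d ((Finset.univ : Finset (Fin d)).erase j)
        (fun S => if i ∈ S then v (insert j S) else v S) i =
      banzhafOn d Finset.univ v i + banzhafOn d Finset.univ v j := by
  classical
  set B := ((Finset.univ : Finset (Fin d)).erase j).erase i with hB
  have hiB : i ∉ B := Finset.notMem_erase _ _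
  have hjB : j ∉ B := fun h => Finset.notMem_erase j _ (Finset.mem_of_mem_erase h)
  have h1 : (Finset.univ : Finset (Fin d)).erase i = insert j B := by
    rw [hB, Finset.erase_right_comm, Finset.insert_erase]
    exact Finset.mem_erase.mpr ⟨hij.symm, Finset.mem_univ j⟩
  have h2 : (Finset.univ : Finset (Fin d)).erase j = insert i B := by
    rw [hB, Finset.insert_erase]
    exact Finset.mem_erase.mpr ⟨hij, Finset.mem_univ i⟩
  unfold banzhafOn
  rw [← hB, h1, h2]
  rw [Finset.sum_powerset_insert hjB, Finset.sum_powerset_insert hiB]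
  have hcard1 : (insert i B).card = d - 1 := by
    rw [← h2, Finset.card_erase_of_mem (Finset.mem_univ j), Finset.card_univ,
      Fintype.card_fin]
  have hcard2 : (Finset.univ : Finset (Fin d)).card = d := by
    simp
  rw [hcard1, hcard2]
  have hL : ∑ S ∈ B.powerset,
      ((if i ∈ insert i S then v (insert j (insert i S)) else v (insert i S)) -
        (if i ∈ S then v (insert j S) else v S))
      = ∑ S ∈ B.powerset, (v (insert j (insert i S)) - v S) := by
    refine Finset.sum_congr rfl fun S hS => ?_
    have hiS : i ∉ S := fun h => hiB (Finset.mem_powerset.mp hS h)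
    simp [hiS]
  rw [hL]
  have hcomm : ∑ S ∈ B.powerset, (v (insert i (insert j S)) - v (insert j S))
      = ∑ S ∈ B.powerset, (v (insert j (insert i S)) - v (insert j S)) := by
    refine Finset.sum_congr rfl fun S hS => by rw [Finset.insert_comm]
  rw [hcomm]
  rw [Finset.sum_sub_distrib, Finset.sum_sub_distrib, Finset.sum_sub_distrib,
    Finset.sum_sub_distrib, Finset.sum_sub_distrib]
  have e1 : d - 1 - 1 = d - 2 := by omega
  have hpow : (2 : ℝ) ^ (d - 1) = 2 * 2 ^ (d - 2) := by
    rw [show d - 1 = d - 2 + 1 from by omega, pow_succ]; ring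
  rw [e1, hpow]
  have h2ne : (2 : ℝ) ^ (d - 1 - 1) ≠ 0 := by positivity
  field_simp
  ring
end

section
/- Row-deletion (downdating) formula for least squares: let X be an n × d real matrix with A = XᵀX invertible, let Y ∈ ℝ^n, let x ∈ ℝ^d and y ∈ ℝ, and let X̃ be X with the row xᵀ appended and Ỹ be Y with entry y appended. Let β̂₊ = (X̃ᵀX̃)⁻¹X̃ᵀỸ be the least-squares estimate for the augmented data and β̂ = A⁻¹XᵀY the estimate with the row deleted. Then β̂ = β̂₊ − A⁻¹ x ( y − xᵀ β̂₊ ). -/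
open Matrix

/-!
Appending the row `xᵀ` to `X` and the entry `y` to `Y` adds `x xᵀ` to the Gram matrix `XᵀX` and
`y x` to `XᵀY`. Since `x xᵀ β = (xᵀβ) x`, the normal equations of the augmented problem say
`A β̂₊ = XᵀY + (y - xᵀβ̂₊) x`, and applying `A⁻¹` gives the formula. The augmented Gram matrix is
invertible because it is the positive definite `A` plus a positive semidefinite matrix.
-/

namespace Matrix

section snoc

variable {R : Type*} {n : ℕ} {m p : Type*}

theorem transpose_mul_of_snoc [NonUnitalNonAssocSemiring R] (X : Matrix (Fin n) m R)
    (Z : Matrix (Fin n) p R) (x : m → R) (z : p → R) :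
    (of (Fin.snoc (of.symm X) x) : Matrix (Fin (n + 1)) m R)ᵀ * of (Fin.snoc (of.symm Z) z) =
      Xᵀ * Z + vecMulVec x z := by
  ext i j
  simp [mul_apply, Fin.sum_univ_castSucc, vecMulVec_apply]

theorem transpose_of_snoc_mulVec_snoc [CommSemiring R] (X : Matrix (Fin n) m R) (x : m → R)
    (Y : Fin n → R) (y : R) :
    (of (Fin.snoc (of.symm X) x) : Matrix (Fin (n + 1)) m R)ᵀ *ᵥ Fin.snoc Y y =
      Xᵀ *ᵥ Y + y • x := by
  ext i
  simp [mulVec, dotProduct, Fin.sum_univ_castSucc, mul_comm]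

end snoc

theorem posDef_transpose_mul_self_of_isUnit_det {m n : Type*} [Fintype m] [Fintype n]
    [DecidableEq n] {X : Matrix m n ℝ} (hX : IsUnit (Xᵀ * X).det) : (Xᵀ * X).PosDef := by
  rw [← conjTranspose_eq_transpose_of_trivial] at hX ⊢
  exact (posSemidef_conjTranspose_mul_self X).posDef_iff_isUnit.mpr
    ((isUnit_iff_isUnit_det _).mpr hX)

theorem posSemidef_vecMulVec_self {n : Type*} [Finite n] (x : n → ℝ) :
    (vecMulVec x x).PosSemidef := by
  simpa using posSemidef_vecMulVec_self_star x

theorem inv_mulVec_eq_of_add_vecMulVec_mulVec_eq {R : Type*} [CommRing R] {n : Type*}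
    [Fintype n] [DecidableEq n] {A : Matrix n n R} (hA : IsUnit A.det) {x c β : n → R} {y : R}
    (hβ : (A + vecMulVec x x) *ᵥ β = c + y • x) :
    A⁻¹ *ᵥ c = β - (y - x ⬝ᵥ β) • (A⁻¹ *ᵥ x) := by
  have hAβ : A *ᵥ β = c + (y - x ⬝ᵥ β) • x := by
    rw [add_mulVec, vecMulVec_mulVec, op_smul_eq_smul] at hβ
    rw [sub_smul, ← add_sub_assoc, ← hβ, add_sub_cancel_right]
  rw [eq_sub_iff_add_eq, ← mulVec_smul, ← mulVec_add, ← hAβ, mulVec_mulVec,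
    nonsing_inv_mul _ hA, one_mulVec]

end Matrix

/-- Row-deletion (downdating) formula for least squares: if `β̂₊` is the least-squares
estimate for the data `(X̃, Ỹ)` obtained by appending the row `xᵀ` to `X` and the entry
`y` to `Y`, and `β̂ = A⁻¹XᵀY` (with `A = XᵀX` invertible) is the estimate with that row
deleted, then `β̂ = β̂₊ − A⁻¹ x ( y − xᵀ β̂₊ )`. -/
theorem stmt_8 (n d : ℕ) (X : Matrix (Fin n) (Fin d) ℝ) (Y : Fin n → ℝ)
    (hA : IsUnit (Xᵀ * X).det) (x : Fin d → ℝ) (y : ℝ) :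
    let A : Matrix (Fin d) (Fin d) ℝ := Xᵀ * X
    let Xt : Matrix (Fin (n + 1)) (Fin d) ℝ := Matrix.of (Fin.snoc (Matrix.of.symm X) x)
    let Yt : Fin (n + 1) → ℝ := Fin.snoc Y y
    let βplus : Fin d → ℝ := (Xtᵀ * Xt)⁻¹ *ᵥ (Xtᵀ *ᵥ Yt)
    A⁻¹ *ᵥ (Xᵀ *ᵥ Y) = βplus - (y - x ⬝ᵥ βplus) • (A⁻¹ *ᵥ x) := by
  intro A Xt Yt βplus
  have hgram : Xtᵀ * Xt = A + vecMulVec x x := transpose_mul_of_snoc X X x x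
  have hB : IsUnit (Xtᵀ * Xt).det := by
    rw [hgram]
    exact ((posDef_transpose_mul_self_of_isUnit_det hA).add_posSemidef
      (posSemidef_vecMulVec_self x)).det_pos.ne'.isUnit
  have hnormal : (A + vecMulVec x x) *ᵥ βplus = Xᵀ *ᵥ Y + y • x := by
    rw [← hgram, mulVec_mulVec, mul_nonsing_inv _ hB, one_mulVec]
    exact transpose_of_snoc_mulVec_snoc X x Y y
  exact inv_mulVec_eq_of_add_vecMulVec_mulVec_eq hA hnormal
end
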